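/- Let G be a finite bipartite graph with nonempty parts L and R and edge set E, and set d₁ = |E|/|L| and d₂ = |E|/|R|. Then for every t ∈ (−1,1) with t ≠ 0 such that the Bethe Hessian satisfies H_G(t) ⪰ 0, one has (d₁−1)(d₂−1) ≤ 1/t². -/

import Mathlib

open scoped Classical

noncomputable section

namespace UNE

/-- The set of neighbors of a vertex set `S`. -/
def nbrSet {V : Type*} (G : SimpleGraph V) (S : Set V) : Set V :=
  {v | ∃ u ∈ S, G.Adj v u}

/-- The set of unique-neighbors of `S`: vertices with exactly one neighbor in `S`. -/
def uniqueNbrs {V : Type*} (G : SimpleGraph V) (S : Set V) : Set V :=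
  {v | ∃! u, u ∈ S ∧ G.Adj v u}

/-- Degree of a vertex. -/
def deg {V : Type*} (G : SimpleGraph V) (v : V) : ℕ :=
  {u | G.Adj v u}.ncard

/-- `L, R` is a bipartition of `G`. -/
structure IsBipartition {V : Type*} (G : SimpleGraph V) (L R : Set V) : Prop where
  disj : Disjoint L R
  cover : L ∪ R = Set.univ
  cross : ∀ ⦃u v⦄, G.Adj u v → (u ∈ L ∧ v ∈ R) ∨ (u ∈ R ∧ v ∈ L)

/-- `G` is `(c,d)`-biregular with parts `L` and `R`. -/
structure IsBiregular {V : Type*} (G : SimpleGraph V) (L R : Set V) (c d : ℕ)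
    extends IsBipartition G L R : Prop where
  degL : ∀ v ∈ L, deg G v = c
  degR : ∀ v ∈ R, deg G v = d

/-- Adjacency matrix over ℝ. -/
def adjMat {V : Type*} (G : SimpleGraph V) : Matrix V V ℝ :=
  Matrix.of fun u v => if G.Adj u v then (1 : ℝ) else 0

/-- Diagonal degree matrix. -/
def degMat {V : Type*} (G : SimpleGraph V) : Matrix V V ℝ :=
  Matrix.diagonal fun v => (deg G v : ℝ)

/-- Bethe Hessian `H_G(t) = (D - I) t² - t A + I`. -/
def betheHessian {V : Type*} (G : SimpleGraph V) (t : ℝ) : Matrix V V ℝ :=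
  t ^ 2 • (degMat G - 1) - t • adjMat G + 1

/-- The second largest eigenvalue (with multiplicity) of a square real matrix,
read off from the multiset of real roots of its characteristic polynomial. -/
def secondEig {V : Type*} [Fintype V] (A : Matrix V V ℝ) : ℝ :=
  (A.charpoly.roots.sort (· ≤ ·)).getD ((A.charpoly.roots.sort (· ≤ ·)).length - 2) 0

/-- Orientations of edges of `G`. -/
abbrev Orient {V : Type*} (G : SimpleGraph V) : Type _ := {p : V × V // G.Adj p.1 p.2}

/-- The non-backtracking matrix of `G`. -/
def nonBacktracking {V : Type*} (G : SimpleGraph V) : Matrix (Orient G) (Orient G) ℝ :=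
  Matrix.of fun e f => if e.1.2 = f.1.1 ∧ e.1.1 ≠ f.1.2 then (1 : ℝ) else 0

/-- Spectral radius: largest absolute value of a complex eigenvalue. -/
def specRad {n : Type*} [Fintype n] (A : Matrix n n ℝ) : ℝ :=
  (((A.map fun x => (x : ℂ)).charpoly.roots.map fun z => ‖z‖).toList.foldr max 0)

/-- `G` contains a bicycle (connected subgraph with one more edge than vertices)
on at most `ℓ` vertices. -/
def HasBicycle {V : Type*} (G : SimpleGraph V) (ℓ : ℝ) : Prop :=
  ∃ H : G.Subgraph, H.Connected ∧ H.edgeSet.ncard = H.verts.ncard + 1 ∧ (H.verts.ncard : ℝ) ≤ ℓ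

/-- `G` contains a cycle of length at most `ℓ`. -/
def HasCycleLe {V : Type*} (G : SimpleGraph V) (ℓ : ℝ) : Prop :=
  ∃ (v : V) (w : G.Walk v v), w.IsCycle ∧ (w.length : ℝ) ≤ ℓ

/-- Number of edges of `G` with both endpoints in `S`. -/
def eInside {V : Type*} (G : SimpleGraph V) (S : Set V) : ℕ :=
  {e ∈ G.edgeSet | ∀ v ∈ e, v ∈ S}.ncard

/-- Number of edges of `G` with one endpoint in `S` and the other in `T`. -/
def eBetween {V : Type*} (G : SimpleGraph V) (S T : Set V) : ℕ :=
  {e ∈ G.edgeSet | ∃ u ∈ S, ∃ v ∈ T, e = s(u, v)}.ncard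

/-- Unique-neighbor expansion profile `P_H(t)`. -/
def profile {V : Type*} (H : SimpleGraph V) (t : ℝ) : ℝ :=
  sInf {r | ∃ S : Set V, S.Nonempty ∧ (S.ncard : ℝ) ≤ t ∧
    r = ((uniqueNbrs H S).ncard : ℝ) / (S.ncard : ℝ)}

/-!
Test the Bethe Hessian against the vector equal to `α` on `L` and `β` on `R`. Since every edge
joins `L` to `R`, its quadratic form becomes the binary form
`(t²m + (1 - t²)|L|) α² - 2tm αβ + (t²m + (1 - t²)|R|) β²` with `m = |E|`. Nonnegativity of that
form bounds its discriminant, `(tm)² ≤ (t²m + (1 - t²)|L|)(t²m + (1 - t²)|R|)`, and after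
dividing by `1 - t² > 0` this is `t²(m - |L|)(m - |R|) ≤ |L||R|`.
-/

open Matrix SimpleGraph Finset

lemma deg_eq_degree {V : Type*} [Fintype V] (G : SimpleGraph V) (v : V) :
    deg G v = G.degree v := by
  rw [deg, ← card_neighborSet_eq_degree, ← Nat.card_eq_fintype_card, Nat.card_coe_set_eq]
  rfl

lemma degMat_eq_degMatrix {V : Type*} [Fintype V] (G : SimpleGraph V) :
    degMat G = G.degMatrix ℝ := by
  simp [degMat, degMatrix, deg_eq_degree]

lemma dotProduct_betheHessian_mulVec {V : Type*} [Fintype V] (G : SimpleGraph V) (t : ℝ)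
    (x : V → ℝ) :
    x ⬝ᵥ (betheHessian G t *ᵥ x) =
      t ^ 2 * (∑ v, G.degree v * x v * x v - x ⬝ᵥ x) - t * (x ⬝ᵥ (G.adjMatrix ℝ *ᵥ x))
        + x ⬝ᵥ x := by
  rw [← dotProduct_mulVec_degMatrix, ← degMat_eq_degMatrix]
  simp only [betheHessian, add_mulVec, sub_mulVec, smul_mulVec, one_mulVec, dotProduct_add,
    dotProduct_sub, dotProduct_smul, smul_eq_mul]
  rfl

lemma sq_le_mul_of_forall_quadratic_nonneg {a b c : ℝ}
    (h : ∀ α : ℝ, 0 ≤ a * α ^ 2 - 2 * b * α + c) : b ^ 2 ≤ a * c := by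
  have := discrim_le_zero (a := a) (b := -2 * b) (c := c) fun α => by linarith [h α]
  rw [discrim] at this
  linarith

def twoValuedVec {V : Type*} (L : Set V) (α β : ℝ) : V → ℝ :=
  fun v => if v ∈ L then α else β

namespace IsBipartition

variable {V : Type*} {G : SimpleGraph V} {L R : Set V}

lemma isBipartiteWith (h : IsBipartition G L R) : G.IsBipartiteWith L R :=
  ⟨h.disj, h.cross⟩

lemma notMem_left_iff (h : IsBipartition G L R) {v : V} : v ∉ L ↔ v ∈ R := by
  have hc : IsCompl L R := ⟨h.disj, codisjoint_iff.mpr h.cover⟩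
  rw [← hc.compl_eq, Set.mem_compl_iff]

variable [Fintype V]

lemma sum_ite {M : Type*} [AddCommMonoid M] (h : IsBipartition G L R) (f g : V → M) :
    ∑ v, (if v ∈ L then f v else g v) = ∑ v ∈ L.toFinset, f v + ∑ v ∈ R.toFinset, g v := by
  rw [Finset.sum_ite]
  congr 2 <;> ext v <;> simp [h.notMem_left_iff]

lemma sum_degree_left (h : IsBipartition G L R) :
    ∑ v ∈ L.toFinset, G.degree v = #G.edgeFinset :=
  isBipartiteWith_sum_degrees_eq_card_edges (s := L.toFinset) (t := R.toFinset)
    (by simpa using h.isBipartiteWith)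

lemma sum_degree_right (h : IsBipartition G L R) :
    ∑ v ∈ R.toFinset, G.degree v = #G.edgeFinset :=
  isBipartiteWith_sum_degrees_eq_card_edges' (s := L.toFinset) (t := R.toFinset)
    (by simpa using h.isBipartiteWith)

lemma sum_twoValuedVec {M : Type*} [AddCommMonoid M] (h : IsBipartition G L R) (α β : ℝ)
    (f : V → ℝ → M) :
    ∑ v, f v (twoValuedVec L α β v) = ∑ v ∈ L.toFinset, f v α + ∑ v ∈ R.toFinset, f v β := by
  simp only [twoValuedVec, apply_ite (f _), h.sum_ite]

lemma dotProduct_self_twoValuedVec (h : IsBipartition G L R) (α β : ℝ) :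
    twoValuedVec L α β ⬝ᵥ twoValuedVec L α β = α ^ 2 * L.ncard + β ^ 2 * R.ncard := by
  rw [dotProduct, h.sum_twoValuedVec α β fun _ a => a * a]
  simp [Set.ncard_eq_toFinset_card', sq, mul_comm]

lemma sum_degree_mul_twoValuedVec_sq (h : IsBipartition G L R) (α β : ℝ) :
    ∑ v, G.degree v * twoValuedVec L α β v * twoValuedVec L α β v =
      (α ^ 2 + β ^ 2) * #G.edgeFinset := by
  rw [h.sum_twoValuedVec α β fun v a => G.degree v * a * a]
  simp only [mul_assoc, ← Finset.sum_mul]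
  rw [← Nat.cast_sum, ← Nat.cast_sum, h.sum_degree_left, h.sum_degree_right]
  ring

lemma twoValuedVec_mul_adjMatrix_mulVec (h : IsBipartition G L R) (α β : ℝ) (u : V) :
    twoValuedVec L α β u * (G.adjMatrix ℝ *ᵥ twoValuedVec L α β) u = α * β * G.degree u := by
  rw [adjMatrix_mulVec_apply]
  by_cases hu : u ∈ L
  · have hnbr : ∀ v ∈ G.neighborFinset u, twoValuedVec L α β v = β := fun v hv =>
      if_neg <| h.notMem_left_iff.mpr <|
        h.isBipartiteWith.mem_of_mem_adj hu ((mem_neighborFinset _ _ _).mp hv)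
    rw [sum_congr rfl hnbr, sum_const, card_neighborFinset_eq_degree, nsmul_eq_mul,
      twoValuedVec, if_pos hu]
    ring
  · have hnbr : ∀ v ∈ G.neighborFinset u, twoValuedVec L α β v = α := fun v hv =>
      if_pos <| h.isBipartiteWith.symm.mem_of_mem_adj (h.notMem_left_iff.mp hu)
        ((mem_neighborFinset _ _ _).mp hv)
    rw [sum_congr rfl hnbr, sum_const, card_neighborFinset_eq_degree, nsmul_eq_mul,
      twoValuedVec, if_neg hu]
    ring

lemma dotProduct_adjMatrix_mulVec_twoValuedVec (h : IsBipartition G L R) (α β : ℝ) :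
    twoValuedVec L α β ⬝ᵥ (G.adjMatrix ℝ *ᵥ twoValuedVec L α β) =
      2 * α * β * #G.edgeFinset := by
  simp only [dotProduct, h.twoValuedVec_mul_adjMatrix_mulVec, ← mul_sum, ← Nat.cast_sum,
    sum_degrees_eq_twice_card_edges]
  push_cast
  ring

lemma dotProduct_betheHessian_mulVec_twoValuedVec (h : IsBipartition G L R) (t α β : ℝ) :
    twoValuedVec L α β ⬝ᵥ (betheHessian G t *ᵥ twoValuedVec L α β) =
      (t ^ 2 * #G.edgeFinset + (1 - t ^ 2) * L.ncard) * α ^ 2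
        - 2 * (t * #G.edgeFinset) * α * β
        + (t ^ 2 * #G.edgeFinset + (1 - t ^ 2) * R.ncard) * β ^ 2 := by
  rw [dotProduct_betheHessian_mulVec, h.sum_degree_mul_twoValuedVec_sq,
    h.dotProduct_adjMatrix_mulVec_twoValuedVec, h.dotProduct_self_twoValuedVec]
  ring

end IsBipartition

lemma mul_div_sub_one_le_one_div_sq {t m ℓ r : ℝ} (hℓ : 0 < ℓ) (hr : 0 < r) (ht0 : t ≠ 0)
    (ht : t ^ 2 < 1)
    (h : (t * m) ^ 2 ≤ (t ^ 2 * m + (1 - t ^ 2) * ℓ) * (t ^ 2 * m + (1 - t ^ 2) * r)) :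
    (m / ℓ - 1) * (m / r - 1) ≤ 1 / t ^ 2 := by
  have key : t ^ 2 * ((m - ℓ) * (m - r)) ≤ ℓ * r := by
    have h1 : 0 < 1 - t ^ 2 := by linarith
    nlinarith
  have heq : (m / ℓ - 1) * (m / r - 1) = (m - ℓ) * (m - r) / (ℓ * r) := by
    field_simp
  rw [heq, div_le_div_iff₀ (by positivity) (by positivity)]
  linarith

/-- Lemma `lem:bipartite-avg-degree`: for a finite bipartite graph with average degrees
`d₁ = |E|/|L|`, `d₂ = |E|/|R|`, if the Bethe Hessian `H_G(t)` is positive semidefinite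
for some `t ∈ (−1,1) \ {0}`, then `(d₁−1)(d₂−1) ≤ 1/t²`. -/
theorem bipartite_average_degree_bound {V : Type} [Fintype V]
    (G : SimpleGraph V) (L R : Set V) (hbip : IsBipartition G L R)
    (hL : L.Nonempty) (hR : R.Nonempty)
    (d₁ d₂ : ℝ)
    (hd₁ : d₁ = (G.edgeSet.ncard : ℝ) / (L.ncard : ℝ))
    (hd₂ : d₂ = (G.edgeSet.ncard : ℝ) / (R.ncard : ℝ))
    (t : ℝ) (ht0 : t ≠ 0) (htlo : -1 < t) (hthi : t < 1)
    (hpsd : (betheHessian G t).PosSemidef) :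
    (d₁ - 1) * (d₂ - 1) ≤ 1 / t ^ 2 := by
  have hquad (α : ℝ) := hpsd.dotProduct_mulVec_nonneg (twoValuedVec L α 1)
  simp only [star_trivial, hbip.dotProduct_betheHessian_mulVec_twoValuedVec, mul_one,
    one_pow] at hquad
  have hdisc := sq_le_mul_of_forall_quadratic_nonneg hquad
  rw [hd₁, hd₂, ← coe_edgeFinset, Set.ncard_coe_finset]
  exact mul_div_sub_one_le_one_div_sq (by exact_mod_cast hL.ncard_pos)
    (by exact_mod_cast hR.ncard_pos) ht0 (by nlinarith) hdisc

end UNE
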